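/- Closure of the deformed N=1 supersymmetry (key algebraic fact): let M be a symmetric 3×3 complex matrix and let Ψ¹, Ψ², Ψ³ be anticommuting elements of an exterior algebra over ℂ. Then Σ_{j,k,l,m,p,q} M^{ij} ε_{jkl} M^{km} ε_{mpq} Ψ^p Ψ^q Ψ^l = 0 for each i ∈ {1,2,3}, where ε is the Levi-Civita symbol on three indices with ε_{123} = 1. -/
import Mathlib


/-- The Levi-Civita symbol on three indices, ε_{123} = 1 (0-based: ε 0 1 2 = 1). -/
def eps3 (a b c : Fin 3) : ℂ :=
  ∏ i : Fin 3, ∏ j : Fin 3,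
    if i < j then
      (if (![a, b, c] i : Fin 3) < ![a, b, c] j then 1
       else if (![a, b, c] j : Fin 3) < ![a, b, c] i then -1 else 0)
    else 1

set_option maxHeartbeats 2000000 in
/-- Closure of the deformed N=1 supersymmetry: for a symmetric 3×3 matrix M
and anticommuting Ψ¹, Ψ², Ψ³ in an exterior algebra over ℂ,
M^{ij} ε_{jkl} M^{km} ε_{mpq} Ψ^p Ψ^q Ψ^l = 0. -/
theorem deformed_susy_closure {V : Type*} [AddCommGroup V] [Module ℂ V]
    (v : Fin 3 → V) (M : Matrix (Fin 3) (Fin 3) ℂ) (hM : ∀ i j, M i j = M j i)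
    (i : Fin 3) :
    let Ψ : Fin 3 → ExteriorAlgebra ℂ V := fun p => ExteriorAlgebra.ι ℂ (v p)
    ∑ j : Fin 3, ∑ k : Fin 3, ∑ l : Fin 3, ∑ m : Fin 3, ∑ p : Fin 3, ∑ q : Fin 3,
      (M i j * eps3 j k l * M k m * eps3 m p q) • (Ψ p * Ψ q * Ψ l) = 0 := by
  intro Ψ
  have sq : ∀ p, Ψ p * Ψ p = 0 := fun p => ExteriorAlgebra.ι_sq_zero _
  have sq' : ∀ p x, Ψ p * (Ψ p * x) = 0 := fun p x => by
    rw [← mul_assoc, sq, zero_mul]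
  have swap : ∀ p q, Ψ p * Ψ q = -(Ψ q * Ψ p) := fun p q =>
    eq_neg_of_add_eq_zero_left (ExteriorAlgebra.ι_add_mul_swap (v p) (v q))
  have swap' : ∀ p q x, Ψ p * (Ψ q * x) = -(Ψ q * (Ψ p * x)) := fun p q x => by
    rw [← mul_assoc, swap, neg_mul, mul_assoc]
  have key : ∀ p q l, Ψ p * Ψ q * Ψ l = eps3 p q l • (Ψ 0 * (Ψ 1 * Ψ 2)) := by
    intro p q l
    fin_cases p <;> fin_cases q <;> fin_cases l <;>
      simp [eps3, Fin.prod_univ_three, mul_assoc, sq, sq',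
        swap 1 0, swap 2 0, swap 2 1, swap' 1 0, swap' 2 0, swap' 2 1]
  simp only [key, smul_smul, ← Finset.smul_sum, ← Finset.sum_smul]
  refine smul_eq_zero_of_left ?_ _
  fin_cases i <;>
    · simp only [Fin.sum_univ_three, hM 1 0, hM 2 0, hM 2 1]
      simp [eps3, Fin.prod_univ_three]
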